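/- arXiv:2512.12143 — 2 statements merged into one kernel-verified Lean document; each statement's English description precedes it below -/
import Mathlib

section
/- Let n ≥ 3 and let G = (G_1, …, G_n) be a collection of n graphs on a common vertex set V with |V| = n such that σ₂(G_i) ≥ n for all i ∈ {1, …, n}. If there exist two distinct vertices u, v ∈ V such that uv is an edge of G_i for every i ∈ {1, …, n}, then G contains a rainbow Hamiltonian cycle. -/
/-!
Since `uv` lies in every `G i`, it never needs a colour of its own: we grow paths through
`uv` whose other edges are rainbow. Such a path `w 0, …, w (k - 1)` on `k ≤ n` vertices uses
`k - 2` colours, so two colours `a`, `b` are free. If an endpoint has a neighbour off the path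
in `G a` or `G b`, the path extends. Otherwise Ore's count (`σ₂ ≥ n` in `G a` and in `G b`, with
`a`, `b` assigned to the endpoints suitably) gives at least `n - k + 1` indices `s` with
`w 0 ~ w (s + 1)` in `G a` and `w (k - 1) ~ w s` in `G b`, and each of them closes the path into
a cycle on the same vertices; for `k < n` there are two, so one of these cycles keeps `uv`. As
`σ₂ ≥ n` makes every `G i` connected, a colour free on the cycle joins it to an outside vertex,
and opening the cycle there gives a longer path through `uv`. For `k = n` the cycle is
Hamiltonian, its edges other than `uv` use `n - 1` colours, and `uv` takes the remaining one.
-/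

open SimpleGraph

/-- A coloring `c` witnesses that the collection `G` contains the edge set `E` as a rainbow
subgraph: `c` is injective on `E` and every edge `e ∈ E` lies in the graph of its color. -/
def RainbowColoring {V : Type*} {m : ℕ} (G : Fin m → SimpleGraph V) (E : Set (Sym2 V))
    (c : Sym2 V → Fin m) : Prop :=
  Set.InjOn c E ∧ ∀ e ∈ E, e ∈ (G (c e)).edgeSet

/-- The collection `G` contains the edge set `E` as a rainbow subgraph. -/
def ContainsRainbow {V : Type*} {m : ℕ} (G : Fin m → SimpleGraph V) (E : Set (Sym2 V)) : Prop :=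
  ∃ c, RainbowColoring G E c

/-- `G` contains a rainbow Hamiltonian `u,v`-path. -/
def RainbowHamPath {V : Type*} [DecidableEq V] {m : ℕ} (G : Fin m → SimpleGraph V)
    (u v : V) : Prop :=
  ∃ p : (⊤ : SimpleGraph V).Walk u v, p.IsHamiltonian ∧ ContainsRainbow G {e | e ∈ p.edges}

/-- `G` contains a rainbow Hamiltonian cycle. -/
def RainbowHamCycle {V : Type*} [DecidableEq V] {m : ℕ} (G : Fin m → SimpleGraph V) : Prop :=
  ∃ (a : V) (p : (⊤ : SimpleGraph V).Walk a a), p.IsHamiltonianCycle ∧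
    ContainsRainbow G {e | e ∈ p.edges}

/-- `σ₂(F) ≥ s`: any two distinct non-adjacent vertices have degree sum at least `s`. -/
def SigmaTwoGE {V : Type*} (F : SimpleGraph V) (s : ℕ) : Prop :=
  ∀ ⦃x y : V⦄, x ≠ y → ¬F.Adj x y → s ≤ (F.neighborSet x).ncard + (F.neighborSet y).ncard

/-- A linear forest: an acyclic graph with maximum degree at most 2
(equivalently, every component is a path). -/
def IsLinearForest {V : Type*} (H : SimpleGraph V) : Prop :=
  H.IsAcyclic ∧ ∀ x : V, (H.neighborSet x).ncard ≤ 2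

section

variable {V : Type*}

section Rainbow

variable {m : ℕ} {G : Fin m → SimpleGraph V}

theorem sub_ncard_le_ncard_compl_image {α : Type*} (c : α → Fin m) {E : Set α}
    (hE : E.Finite) : m - E.ncard ≤ (c '' E)ᶜ.ncard := by
  rw [Set.ncard_compl, Nat.card_eq_fintype_card, Fintype.card_fin]
  have := Set.ncard_image_le (f := c) hE
  omega

theorem exists_notMem_image_of_ncard_lt {α : Type*} (c : α → Fin m) {E : Set α}
    (hE : E.Finite) (h : E.ncard < m) : ∃ a, a ∉ c '' E :=
  Set.nonempty_of_ncard_ne_zero (s := (c '' E)ᶜ)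
    (by have := sub_ncard_le_ncard_compl_image c hE; omega)

theorem exists_ne_notMem_image_of_ncard_add_two_le {α : Type*} (c : α → Fin m) {E : Set α}
    (hE : E.Finite) (h : E.ncard + 2 ≤ m) : ∃ p q, p ≠ q ∧ p ∉ c '' E ∧ q ∉ c '' E := by
  have := sub_ncard_le_ncard_compl_image c hE
  obtain ⟨p, q, hp, hq, hpq⟩ :=
    (Set.one_lt_ncard_iff (s := (c '' E)ᶜ) (Set.toFinite _)).1 (by omega)
  exact ⟨p, q, hpq, hp, hq⟩

namespace RainbowColoring

variable {E E' : Set (Sym2 V)} {c : Sym2 V → Fin m}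

theorem mono (hc : RainbowColoring G E c) (h : E' ⊆ E) : RainbowColoring G E' c :=
  ⟨hc.1.mono h, fun e he => hc.2 e (h he)⟩

theorem exists_insert [DecidableEq V] (hc : RainbowColoring G E c) {e : Sym2 V} {a : Fin m}
    (ha : a ∉ c '' E) (he : e ∈ (G a).edgeSet) :
    ∃ c', RainbowColoring G (insert e E) c' ∧ c' '' insert e E ⊆ insert a (c '' E) := by
  have hEq : Set.EqOn (Function.update c e a) c (E \ {e}) := fun x hx =>
    Function.update_of_ne hx.2 _ _
  have hfresh : a ∉ c '' (E \ {e}) := fun h => ha (Set.image_mono Set.sdiff_subset h)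
  rw [← Set.insert_sdiff_singleton]
  refine ⟨Function.update c e a, ⟨?_, ?_⟩, ?_⟩
  · rw [Set.injOn_insert fun h => h.2 rfl, hEq.image_eq, Function.update_self]
    exact ⟨(hc.1.mono Set.sdiff_subset).congr hEq.symm, hfresh⟩
  · rintro x (rfl | hx)
    · rwa [Function.update_self]
    · rw [hEq hx]
      exact hc.2 x hx.1
  · rw [Set.image_insert_eq, hEq.image_eq, Function.update_self]
    exact Set.insert_subset_insert (Set.image_mono Set.sdiff_subset)

end RainbowColoring

theorem ContainsRainbow.of_sdiff_singleton [DecidableEq V] {E : Set (Sym2 V)} {e : Sym2 V}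
    (hc : ContainsRainbow G (E \ {e})) (hE : E.Finite) (hm : E.ncard ≤ m)
    (he : ∀ i, e ∈ (G i).edgeSet) : ContainsRainbow G E := by
  by_cases heE : e ∈ E
  · obtain ⟨c, hc⟩ := hc
    have := (Set.ncard_pos hE).2 ⟨e, heE⟩
    obtain ⟨a, ha⟩ := exists_notMem_image_of_ncard_lt c hE.sdiff (by
      rw [Set.ncard_sdiff_singleton_of_mem heE]; omega)
    obtain ⟨c', hc', -⟩ := hc.exists_insert ha (he a)
    rw [Set.insert_sdiff_singleton, Set.insert_eq_of_mem heE] at hc'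
    exact ⟨c', hc'⟩
  · rwa [Set.sdiff_singleton_eq_self heE] at hc

end Rainbow

theorem SigmaTwoGE.exists_adj_mem_compl [Fintype V] {F : SimpleGraph V} {s : ℕ}
    (hF : SigmaTwoGE F s) (hs : Fintype.card V ≤ s + 1) {S : Set V} (hS : S.Nonempty)
    (hSc : Sᶜ.Nonempty) : ∃ x ∈ S, ∃ y ∉ S, F.Adj x y := by
  obtain ⟨x, hx⟩ := hS
  obtain ⟨y, hy⟩ := hSc
  by_cases hxy : F.Adj x y
  · exact ⟨x, hx, y, hy, hxy⟩
  have hne : x ≠ y := by rintro rfl; exact hy hx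
  obtain ⟨z, hzx, hzy⟩ : (F.neighborSet x ∩ F.neighborSet y).Nonempty := by
    have hsub : F.neighborSet x ∪ F.neighborSet y ⊆ ({x, y} : Set V)ᶜ := by
      rintro z hz (rfl | rfl) <;> rcases hz with hz | hz
      exacts [F.irrefl hz, hxy hz.symm, hxy hz, F.irrefl hz]
    have hunion := Set.ncard_le_ncard hsub
    have hcompl := Set.ncard_add_ncard_compl {x, y}
    rw [Set.ncard_pair hne, Nat.card_eq_fintype_card] at hcompl
    have := Set.ncard_union_add_ncard_inter (F.neighborSet x) (F.neighborSet y)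
    have := hF hne hxy
    apply Set.nonempty_of_ncard_ne_zero
    omega
  by_cases hz : z ∈ S
  · exact ⟨z, hz, y, hy, hzy.symm⟩
  · exact ⟨x, hx, z, hz, hzx⟩

theorem List.mem_tail_or_mem_tail_reverse {α : Type*} {l : List α} (hl : 2 ≤ l.length) {a : α}
    (ha : a ∈ l) : a ∈ l.tail ∨ a ∈ l.reverse.tail := by
  obtain _ | ⟨b, l⟩ := l
  · simp at ha
  obtain rfl | ha := List.mem_cons.1 ha
  · right
    have : l ≠ [] := List.ne_nil_of_length_pos (by simp at hl; omega)
    rw [List.reverse_cons, List.tail_append_of_ne_nil (by simpa using this)]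
    simp
  · exact Or.inl ha

theorem List.Nodup.ncard_setOf_mem {α : Type*} {l : List α} (h : l.Nodup) :
    {x | x ∈ l}.ncard = l.length := by
  classical
  rw [show {x | x ∈ l} = ↑l.toFinset by ext; simp, Set.ncard_coe_finset,
    List.toFinset_card_of_nodup h]

namespace SimpleGraph.Walk

variable {H : SimpleGraph V} {x y : V}

theorem IsTrail.ncard_edgeSet {p : H.Walk x y} (hp : p.IsTrail) : p.edgeSet.ncard = p.length :=
  hp.edges_nodup.ncard_setOf_mem.trans p.length_edges

theorem IsTrail.ncard_edgeSet_sdiff_singleton {p : H.Walk x y} (hp : p.IsTrail) {e : Sym2 V}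
    (he : e ∈ p.edges) : (p.edgeSet \ {e}).ncard = p.length - 1 := by
  rw [Set.ncard_sdiff_singleton_of_mem (s := p.edgeSet) he, hp.ncard_edgeSet]

theorem IsCycle.ncard_setOf_mem_support {z : V} {c : H.Walk z z} (hc : c.IsCycle) :
    {w | w ∈ c.support}.ncard = c.length := by
  have hz : z ∈ c.support.tail := end_mem_tail_support hc.not_nil
  have : {w | w ∈ c.support} = {w | w ∈ c.support.tail} := by
    ext w
    rw [Set.mem_ofPred_eq, ← cons_tail_support, List.mem_cons]
    exact ⟨fun h => h.elim (· ▸ hz) id, Or.inr⟩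
  rw [this, hc.support_nodup.ncard_setOf_mem, List.length_tail, length_support,
    Nat.add_sub_cancel]

theorem IsPath.ncard_neighborSet_add_ncard_neighborSet_le {p : H.Walk x y} (hp : p.IsPath)
    {F F' : SimpleGraph V} (hx : F.neighborSet x ⊆ {w | w ∈ p.support})
    (hy : F'.neighborSet y ⊆ {w | w ∈ p.support}) :
    (F.neighborSet x).ncard + (F'.neighborSet y).ncard ≤
      {i | i < p.length ∧ F.Adj x (p.getVert (i + 1)) ∧ F'.Adj y (p.getVert i)}.ncard +
        p.length := by
  set A := {i | i < p.length ∧ F.Adj x (p.getVert (i + 1))}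
  set B := {i | i < p.length ∧ F'.Adj y (p.getVert i)}
  have hinj {i j : ℕ} (hi : i ≤ p.length) (hj : j ≤ p.length) (h : p.getVert i = p.getVert j) :
      i = j := hp.getVert_injOn hi hj h
  have hA : F.neighborSet x = (fun i => p.getVert (i + 1)) '' A := by
    ext w
    refine ⟨fun hw => ?_, fun ⟨i, ⟨_, hi⟩, hw⟩ => hw ▸ hi⟩
    obtain ⟨j, rfl, hj⟩ := mem_support_iff_exists_getVert.1 (hx hw)
    obtain _ | i := j
    · exact absurd hw (by simp)
    · exact ⟨i, ⟨hj, hw⟩, rfl⟩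
  have hB : F'.neighborSet y = p.getVert '' B := by
    ext w
    refine ⟨fun hw => ?_, fun ⟨i, ⟨_, hi⟩, hw⟩ => hw ▸ hi⟩
    obtain ⟨j, rfl, hj⟩ := mem_support_iff_exists_getVert.1 (hy hw)
    refine ⟨j, ⟨lt_of_le_of_ne hj ?_, hw⟩, rfl⟩
    rintro rfl
    exact absurd hw (by simp)
  have hAB : A ∪ B ⊆ ↑(Finset.range p.length) := by
    rintro i (⟨hi, -⟩ | ⟨hi, -⟩) <;> simpa using hi
  have hunion := Set.ncard_le_ncard hAB
  rw [Set.ncard_coe_finset, Finset.card_range] at hunion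
  have hfin := (Finset.range p.length).finite_toSet
  have hinter : A ∩ B =
      {i | i < p.length ∧ F.Adj x (p.getVert (i + 1)) ∧ F'.Adj y (p.getVert i)} := by
    ext i
    simp only [A, B, Set.mem_inter_iff, Set.mem_ofPred_eq]
    tauto
  have := Set.ncard_union_add_ncard_inter A B (hfin.subset (Set.subset_union_left.trans hAB))
    (hfin.subset (Set.subset_union_right.trans hAB))
  rw [hinter] at this
  rw [hA, hB, Set.InjOn.ncard_image fun i hi j hj h => by simpa using hinj hi.1 hj.1 h,
    Set.InjOn.ncard_image fun i hi j hj h => hinj hi.1.le hj.1.le h]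
  omega

theorem IsPath.exists_isCycle_of_adj_getVert {p : H.Walk x y} (hp : p.IsPath)
    (hlen : 2 ≤ p.length) {s : ℕ} (hs : s < p.length) (hx : H.Adj (p.getVert (s + 1)) x)
    (hy : H.Adj (p.getVert s) y) :
    ∃ c : H.Walk (p.getVert (s + 1)) (p.getVert (s + 1)), c.IsCycle ∧
      c.length = p.length + 1 ∧
      (∀ e ∈ c.edges, e ∈ p.edges ∨ e = s(p.getVert (s + 1), x) ∨ e = s(p.getVert s, y)) ∧
      ∀ i < p.length, i ≠ s → s(p.getVert i, p.getVert (i + 1)) ∈ c.edges := by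
  set q := (p.take s).append (cons hy (p.drop (s + 1)).reverse)
  have hq : q.support.Perm p.support := by
    rw [support_append, support_cons, List.tail_cons, support_reverse,
      drop_support_eq_support_drop_min, support_take, min_eq_left (by omega)]
    exact (List.reverse_perm _).append_left _ |>.trans (by rw [List.take_append_drop])
  have hqlen : q.length = p.length := by
    simp only [q, length_append, length_cons, length_reverse, take_length, drop_length]
    omega
  refine ⟨cons hx q, ?_, by simp [hqlen], ?_, ?_⟩
  · rw [isCycle_iff_isPath_tail_and_le_length]
    simp only [tail_cons, getVert_cons_succ, isPath_copy, length_cons, hqlen]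
    exact ⟨(isPath_def q).2 (hq.nodup_iff.2 hp.support_nodup), by omega⟩
  · intro e he
    simp only [q, edges_cons, edges_append, edges_reverse, List.mem_cons, List.mem_append,
      List.mem_reverse, edges_take, edges_drop] at he
    rcases he with rfl | he | rfl | he
    exacts [Or.inr (Or.inl rfl), Or.inl (List.mem_of_mem_take he), Or.inr (Or.inr rfl),
      Or.inl (List.mem_of_mem_drop he)]
  · intro i hi his
    simp only [q, edges_cons, edges_append, edges_reverse, List.mem_cons, List.mem_append,
      List.mem_reverse]
    rcases Nat.lt_or_gt_of_ne his with h | h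
    · refine Or.inr (Or.inl ((p.take s).mk_mem_edges_iff_exists.2 ⟨i, ?_, ?_⟩))
      · rw [take_length]; omega
      · rw [take_getVert, take_getVert, min_eq_right h.le, min_eq_right h]
    · refine Or.inr (Or.inr (Or.inr ((p.drop (s + 1)).mk_mem_edges_iff_exists.2
        ⟨i - (s + 1), ?_, ?_⟩)))
      · rw [drop_length]; omega
      · rw [drop_getVert, drop_getVert, Nat.add_sub_cancel' h,
          show s + 1 + (i - (s + 1) + 1) = i + 1 by omega]

theorem IsCycle.exists_isPath_of_mem_edges {t : V} {d : H.Walk t t} (hd : d.IsCycle)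
    {e : Sym2 V} (he : e ∈ d.edges) :
    ∃ (w : V) (q : H.Walk w t), q.IsPath ∧ q.length + 1 = d.length ∧ e ∈ q.edges ∧
      (∀ f ∈ q.edges, f ∈ d.edges) ∧ ∀ v ∈ q.support, v ∈ d.support := by
  have h3 := hd.three_le_length
  obtain ⟨d', hd', hlen, hde, hds, he'⟩ : ∃ d' : H.Walk t t, d'.IsCycle ∧
      d'.length = d.length ∧ (∀ f ∈ d'.edges, f ∈ d.edges) ∧
      (∀ v ∈ d'.support, v ∈ d.support) ∧ e ∈ d'.tail.edges := by
    rcases List.mem_tail_or_mem_tail_reverse (by rw [length_edges]; omega) he with h | h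
    · exact ⟨d, hd, rfl, fun _ => id, fun _ => id, by rwa [edges_tail]⟩
    · refine ⟨d.reverse, hd.reverse, length_reverse d, fun f hf => ?_, fun v hv => ?_, ?_⟩
      · simpa using hf
      · simpa using hv
      · rwa [edges_tail, edges_reverse]
  refine ⟨_, d'.tail, hd'.isPath_tail, ?_, he', fun f hf => hde f ?_, fun v hv => hds v ?_⟩
  · rw [length_tail]
    omega
  · rw [edges_tail] at hf
    exact List.mem_of_mem_tail hf
  · rw [support_tail_of_not_nil _ hd'.not_nil] at hv
    exact List.mem_of_mem_tail hv

end SimpleGraph.Walk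

section RainbowPaths

variable {n : ℕ} {G : Fin n → SimpleGraph V} {e : Sym2 V}

def HasRainbowPathThrough (G : Fin n → SimpleGraph V) (e : Sym2 V) (L : ℕ) : Prop :=
  ∃ (x y : V) (p : (⊤ : SimpleGraph V).Walk x y), p.IsPath ∧ p.length = L ∧ e ∈ p.edges ∧
    ContainsRainbow G (p.edgeSet \ {e})

open Walk

variable [DecidableEq V]

theorem hasRainbowPathThrough_concat {x y w : V} {p : (⊤ : SimpleGraph V).Walk x y}
    (hp : p.IsPath) (he : e ∈ p.edges) {c : Sym2 V → Fin n}
    (hc : RainbowColoring G (p.edgeSet \ {e}) c) {a : Fin n} (ha : a ∉ c '' (p.edgeSet \ {e}))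
    (hw : w ∉ p.support) (hyw : (G a).Adj y w) : HasRainbowPathThrough G e (p.length + 1) := by
  have hadj : (⊤ : SimpleGraph V).Adj y w := (G a).ne_of_adj hyw
  obtain ⟨c', hc', -⟩ := hc.exists_insert ha ((G a).mem_edgeSet.2 hyw)
  refine ⟨x, w, p.concat hadj, hp.concat hw hadj, p.length_concat hadj, ?_, c', hc'.mono ?_⟩
  · simp [edges_concat, he]
  · rw [edgeSet_concat]
    exact Set.insert_sdiff_subset

theorem SimpleGraph.Walk.IsPath.exists_rainbow_cycle_of_le_ncard_add_ncard {x y : V}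
    {p : (⊤ : SimpleGraph V).Walk x y} (hp : p.IsPath) (hlen : 2 ≤ p.length)
    (hlt : p.length < n) (he : e ∈ p.edges) {c : Sym2 V → Fin n}
    (hc : RainbowColoring G (p.edgeSet \ {e}) c) {a b : Fin n} (hab : a ≠ b)
    (ha : a ∉ c '' (p.edgeSet \ {e})) (hb : b ∉ c '' (p.edgeSet \ {e}))
    (hxa : (G a).neighborSet x ⊆ {w | w ∈ p.support})
    (hyb : (G b).neighborSet y ⊆ {w | w ∈ p.support})
    (hdeg : n ≤ ((G a).neighborSet x).ncard + ((G b).neighborSet y).ncard) :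
    ∃ (z : V) (C : (⊤ : SimpleGraph V).Walk z z), C.IsCycle ∧ C.length = p.length + 1 ∧
      ContainsRainbow G (C.edgeSet \ {e}) ∧ (p.length + 1 < n → e ∈ C.edges) := by
  have hcount := hp.ncard_neighborSet_add_ncard_neighborSet_le hxa hyb
  set X := {i | i < p.length ∧ (G a).Adj x (p.getVert (i + 1)) ∧ (G b).Adj y (p.getVert i)}
  obtain ⟨j, hj, rfl⟩ : ∃ j < p.length, s(p.getVert j, p.getVert (j + 1)) = e := by
    obtain ⟨j, hj, hje⟩ := List.mem_iff_getElem.1 he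
    exact ⟨j, by simpa using hj, by rw [← hje, getElem_edges]⟩
  obtain ⟨s, ⟨hs, hsa, hsb⟩, hsj⟩ : ∃ s ∈ X, p.length + 1 < n → s ≠ j := by
    by_cases hlt : p.length + 1 < n
    · obtain ⟨s, hs, hsj⟩ := Set.exists_ne_of_one_lt_ncard (s := X) (by omega) j
      exact ⟨s, hs, fun _ => hsj⟩
    · obtain ⟨s, hs⟩ := Set.nonempty_of_ncard_ne_zero (s := X) (by omega)
      exact ⟨s, hs, fun h => absurd h hlt⟩
  obtain ⟨C, hC, hClen, hCe, hCp⟩ := hp.exists_isCycle_of_adj_getVert hlen hs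
    ((G a).ne_of_adj hsa).symm ((G b).ne_of_adj hsb).symm
  obtain ⟨c₁, hc₁, hc₁im⟩ := hc.exists_insert ha ((G a).mem_edgeSet.2 hsa.symm)
  obtain ⟨c₂, hc₂, -⟩ := hc₁.exists_insert
    (fun h => (Set.mem_insert_iff.1 (hc₁im h)).elim (fun h => hab h.symm) hb)
    ((G b).mem_edgeSet.2 hsb.symm)
  refine ⟨_, C, hC, hClen, ⟨c₂, hc₂.mono ?_⟩, fun hlt => hCp j hj (hsj hlt).symm⟩
  rintro f ⟨hf, hfe⟩
  rcases hCe f hf with hf | rfl | rfl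
  · exact Or.inr (Or.inr ⟨hf, hfe⟩)
  · exact Or.inr (Or.inl rfl)
  · exact Or.inl rfl

theorem SimpleGraph.Walk.IsPath.exists_rainbow_cycle (hσ : ∀ i, SigmaTwoGE (G i) n)
    {x y : V} {p : (⊤ : SimpleGraph V).Walk x y} (hp : p.IsPath) (hlen : 2 ≤ p.length)
    (hlt : p.length < n) (he : e ∈ p.edges) {c : Sym2 V → Fin n}
    (hc : RainbowColoring G (p.edgeSet \ {e}) c) {a b : Fin n} (hab : a ≠ b)
    (ha : a ∉ c '' (p.edgeSet \ {e})) (hb : b ∉ c '' (p.edgeSet \ {e}))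
    (hN : ∀ i ∈ ({a, b} : Set (Fin n)), ∀ w, (G i).Adj x w ∨ (G i).Adj y w → w ∈ p.support) :
    ∃ (z : V) (C : (⊤ : SimpleGraph V).Walk z z), C.IsCycle ∧ C.length = p.length + 1 ∧
      ContainsRainbow G (C.edgeSet \ {e}) ∧ (p.length + 1 < n → e ∈ C.edges) := by
  have hxy : x ≠ y := fun h => by
    have := hp.getVert_injOn (show 0 ≤ p.length from Nat.zero_le _)
      (show p.length ≤ p.length from le_rfl) (by rwa [getVert_zero, getVert_length])
    omega
  by_cases hclose : ∃ i ∈ ({a, b} : Set (Fin n)), (G i).Adj y x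
  · obtain ⟨i, hi, hyx⟩ := hclose
    have hi' : i ∉ c '' (p.edgeSet \ {e}) := by rcases hi with rfl | rfl <;> assumption
    obtain ⟨c', hc', -⟩ := hc.exists_insert hi' ((G i).mem_edgeSet.2 hyx)
    refine ⟨y, cons (hxy.symm : (⊤ : SimpleGraph V).Adj y x) p, ?_, rfl, ⟨c', hc'.mono ?_⟩,
      fun _ => List.mem_cons_of_mem _ he⟩
    · rw [isCycle_iff_isPath_tail_and_le_length]
      simp only [tail_cons, getVert_cons_succ, isPath_copy, length_cons]
      exact ⟨hp, by omega⟩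
    · rw [edgeSet_cons]
      exact Set.insert_sdiff_subset
  push Not at hclose
  have hsub {i : Fin n} (hi : i ∈ ({a, b} : Set (Fin n))) :
      (G i).neighborSet x ⊆ {w | w ∈ p.support} ∧ (G i).neighborSet y ⊆ {w | w ∈ p.support} :=
    ⟨fun w hw => hN i hi w (Or.inl hw), fun w hw => hN i hi w (Or.inr hw)⟩
  have ha' : a ∈ ({a, b} : Set (Fin n)) := Or.inl rfl
  have hb' : b ∈ ({a, b} : Set (Fin n)) := Or.inr rfl
  have hda := hσ a hxy fun h => hclose a ha' h.symm
  have hdb := hσ b hxy fun h => hclose b hb' h.symm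
  rcases le_or_gt n (((G a).neighborSet x).ncard + ((G b).neighborSet y).ncard) with h | h
  · exact hp.exists_rainbow_cycle_of_le_ncard_add_ncard hlen hlt he hc hab ha hb
      (hsub ha').1 (hsub hb').2 h
  · exact hp.exists_rainbow_cycle_of_le_ncard_add_ncard hlen hlt he hc hab.symm hb ha
      (hsub hb').1 (hsub ha').2 (by omega)

variable [Fintype V]

theorem SimpleGraph.Walk.IsCycle.hasRainbowPathThrough (hV : Fintype.card V = n)
    (hσ : ∀ i, SigmaTwoGE (G i) n) {z : V} {c : (⊤ : SimpleGraph V).Walk z z} (hc : c.IsCycle)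
    (hlen : c.length < n) (he : e ∈ c.edges) (hrb : ContainsRainbow G (c.edgeSet \ {e})) :
    HasRainbowPathThrough G e c.length := by
  obtain ⟨col, hcol⟩ := hrb
  obtain ⟨a, ha⟩ := exists_notMem_image_of_ncard_lt col (Set.toFinite _)
    (by rw [hc.isTrail.ncard_edgeSet_sdiff_singleton he]; omega)
  have hS := hc.ncard_setOf_mem_support
  have hSc := Set.ncard_add_ncard_compl {w | w ∈ c.support}
  rw [Nat.card_eq_fintype_card] at hSc
  obtain ⟨t, ht, w, hw, htw⟩ := (hσ a).exists_adj_mem_compl (by omega) ⟨z, c.start_mem_support⟩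
    (Set.nonempty_of_ncard_ne_zero (s := {w | w ∈ c.support}ᶜ) (by omega))
  obtain ⟨w', q, hq, hqlen, heq, hqc, hqs⟩ :=
    (hc.rotate ht).exists_isPath_of_mem_edges ((rotate_edges c t ht).mem_iff.2 he)
  have hsub : q.edgeSet \ {e} ⊆ c.edgeSet \ {e} :=
    fun f hf => ⟨(rotate_edges c t ht).mem_iff.1 (hqc f hf.1), hf.2⟩
  rw [← length_rotate c t ht, ← hqlen]
  exact hasRainbowPathThrough_concat hq heq (hcol.mono hsub) (fun h => ha (Set.image_mono hsub h))
    (fun h => hw ((mem_support_rotate_iff c t ht).1 (hqs _ h))) htw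

theorem HasRainbowPathThrough.succ (hV : Fintype.card V = n) (hσ : ∀ i, SigmaTwoGE (G i) n)
    {L : ℕ} (h : HasRainbowPathThrough G e L) (hL : 2 ≤ L) (hLn : L + 1 < n) :
    HasRainbowPathThrough G e (L + 1) := by
  obtain ⟨x, y, p, hp, rfl, he, c, hc⟩ := h
  obtain ⟨a, b, hab, ha, hb⟩ := exists_ne_notMem_image_of_ncard_add_two_le c (Set.toFinite _)
    (by rw [hp.isTrail.ncard_edgeSet_sdiff_singleton he]; omega)
  by_cases hext : ∃ i ∈ ({a, b} : Set (Fin n)), ∃ w, w ∉ p.support ∧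
      ((G i).Adj x w ∨ (G i).Adj y w)
  · obtain ⟨i, hi, w, hw, hxw | hyw⟩ := hext <;>
      have hi' : i ∉ c '' (p.edgeSet \ {e}) := by rcases hi with rfl | rfl <;> assumption
    · rw [← p.length_reverse]
      exact hasRainbowPathThrough_concat hp.reverse (by simpa using he)
        (by rwa [edgeSet_reverse]) (by rwa [edgeSet_reverse]) (by simpa using hw) hxw
    · exact hasRainbowPathThrough_concat hp he hc hi' hw hyw
  push Not at hext
  obtain ⟨z, C, hC, hClen, hCrb, hCe⟩ := hp.exists_rainbow_cycle hσ hL (by omega) he hc hab ha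
    hb fun i hi w hw => by_contra fun h => hw.elim (hext i hi w h).1 (hext i hi w h).2
  rw [← hClen]
  exact hC.hasRainbowPathThrough hV hσ (by omega) (hCe (by omega)) hCrb

theorem hasRainbowPathThrough_two (hn : 3 ≤ n) (hV : Fintype.card V = n)
    (hσ : ∀ i, SigmaTwoGE (G i) n) {u v : V} (huv : u ≠ v) :
    HasRainbowPathThrough G s(u, v) 2 := by
  have hcompl := Set.ncard_add_ncard_compl ({u, v} : Set V)
  rw [Set.ncard_pair huv, Nat.card_eq_fintype_card] at hcompl
  obtain ⟨t, ht, w, hw, htw⟩ := (hσ ⟨0, by omega⟩).exists_adj_mem_compl (by omega)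
    (Set.insert_nonempty u {v})
    (Set.nonempty_of_ncard_ne_zero (s := ({u, v} : Set V)ᶜ) (by omega))
  have hwu : w ≠ u := fun h => hw (Or.inl h)
  have hwv : w ≠ v := fun h => hw (Or.inr h)
  have extend {t' : V} (h : (⊤ : SimpleGraph V).Adj t' t) (hedge : s(t', t) = s(u, v))
      (hwt' : w ≠ t') : HasRainbowPathThrough G s(u, v) 2 := by
    have hE : (cons h nil).edgeSet \ {s(u, v)} = ∅ := by simp [edgeSet_cons, hedge]
    refine hasRainbowPathThrough_concat (p := cons h nil) (c := fun _ => ⟨0, by omega⟩)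
      (by simpa using h) (by simp [hedge])
      (by rw [hE]; exact ⟨Set.injOn_empty _, fun _ h => h.elim⟩) (by rw [hE]; simp) ?_ htw
    simp [hwt', (G _).ne_of_adj htw |>.symm]
  rcases ht with rfl | rfl
  · exact extend huv.symm Sym2.eq_swap hwv
  · exact extend huv rfl hwu

theorem HasRainbowPathThrough.rainbowHamCycle (hn : 3 ≤ n) (hV : Fintype.card V = n)
    (hσ : ∀ i, SigmaTwoGE (G i) n) (h : HasRainbowPathThrough G e (n - 1))
    (he : ∀ i, e ∈ (G i).edgeSet) : RainbowHamCycle G := by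
  obtain ⟨x, y, p, hp, hlen, hep, c, hc⟩ := h
  have hHam : p.IsHamiltonian := isHamiltonian_iff_isPath_and_length_eq.2 ⟨hp, by rw [hlen, hV]⟩
  obtain ⟨a, b, hab, ha, hb⟩ := exists_ne_notMem_image_of_ncard_add_two_le c (Set.toFinite _)
    (by rw [hp.isTrail.ncard_edgeSet_sdiff_singleton hep]; omega)
  obtain ⟨z, C, hC, hClen, hCrb, -⟩ := hp.exists_rainbow_cycle hσ (by omega) (by omega) hep hc hab
    ha hb fun i _ w _ => hHam.mem_support w
  refine ⟨z, C, isHamiltonianCycle_iff_isCycle_and_length_eq.2 ⟨hC, by omega⟩, ?_⟩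
  exact hCrb.of_sdiff_singleton (Set.toFinite _) (by rw [hC.isTrail.ncard_edgeSet]; omega) he

end RainbowPaths

end

/-- under the rainbow Ore condition, a common edge yields a rainbow
Hamiltonian cycle. -/
theorem rainbow_ham_cycle_of_common_edge
    {V : Type*} [Fintype V] [DecidableEq V] {n : ℕ} (hn : 3 ≤ n)
    (hV : Fintype.card V = n) (G : Fin n → SimpleGraph V)
    (hσ : ∀ i : Fin n, SigmaTwoGE (G i) n)
    (u v : V) (huv : u ≠ v) (hadj : ∀ i : Fin n, (G i).Adj u v) :
    RainbowHamCycle G := by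
  have hpath (L : ℕ) (hL : 2 ≤ L) : L < n → HasRainbowPathThrough G s(u, v) L := by
    induction L, hL using Nat.le_induction with
    | base => exact fun _ => hasRainbowPathThrough_two hn hV hσ huv
    | succ L hL ih => exact fun hLn => (ih (by omega)).succ hV hσ hL hLn
  exact (hpath (n - 1) (by omega) (by omega)).rainbowHamCycle hn hV hσ
    fun i => (G i).mem_edgeSet.2 (hadj i)
end

section
/- Let k ≥ 0 and n be integers and let F be a graph on n vertices such that d_F(x) + d_F(y) ≥ n + k for every pair of distinct non-adjacent vertices x, y of F. Let D ⊆ V(F) with |D| = k + 2, and suppose there is a partition V(F) ∖ D = X ∪ Y with |X| ≥ 1 and |Y| ≥ 1 such that the induced subgraph of F on V(F) ∖ D is exactly the disjoint union of the complete graph on X and the complete graph on Y (that is, within V(F) ∖ D, all pairs inside X are edges, all pairs inside Y are edges, and there are no edges between X and Y). Then every vertex of D is adjacent in F to every vertex of V(F) ∖ D. -/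
open SimpleGraph

/-! For `w ∈ X` pick `y ∈ Y`; they are non-adjacent. Every neighbour of `w` lies in `X ∪ D` and
every neighbour of `y` in `Y ∪ D`, so `d(w) + d(y) ≤ |X| + |Y| - 2 + |N(w) ∩ D| + |D|`. Since
`n + k = |X| + |Y| + 2|D| - 2`, the Ore bound forces `|N(w) ∩ D| ≥ |D|`, i.e. `D ⊆ N(w)`. -/

namespace SimpleGraph

variable {V : Type*} {F : SimpleGraph V} {D S X Y : Set V} {w : V}

theorem neighborSet_subset_union_of_not_adj (hpart : X ∪ Y = Dᶜ)
    (hXY : ∀ x ∈ X, ∀ y ∈ Y, ¬ F.Adj x y) (hw : w ∈ X) : F.neighborSet w ⊆ X ∪ D := by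
  intro z hz
  by_cases hzD : z ∈ D
  · exact Or.inr hzD
  · rcases (show z ∈ X ∪ Y from hpart ▸ hzD) with hzX | hzY
    · exact Or.inl hzX
    · exact absurd hz (hXY w hw z hzY)

theorem not_adj_swap (hXY : ∀ x ∈ X, ∀ y ∈ Y, ¬ F.Adj x y) : ∀ y ∈ Y, ∀ x ∈ X, ¬ F.Adj y x :=
  fun y hy x hx h => hXY x hx y hy h.symm

variable [Finite V]

theorem ncard_neighborSet_le_of_subset_union (hw : w ∈ S) (hN : F.neighborSet w ⊆ S ∪ D) :
    (F.neighborSet w).ncard ≤ (S.ncard - 1) + (D ∩ F.neighborSet w).ncard := by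
  have hsub : F.neighborSet w ⊆ (S \ {w}) ∪ (D ∩ F.neighborSet w) := by
    intro z hz
    rcases hN hz with hzS | hzD
    · exact Or.inl ⟨hzS, (F.ne_of_adj hz).symm⟩
    · exact Or.inr ⟨hzD, hz⟩
  calc (F.neighborSet w).ncard
      ≤ ((S \ {w}) ∪ (D ∩ F.neighborSet w)).ncard := Set.ncard_le_ncard hsub
    _ ≤ (S \ {w}).ncard + (D ∩ F.neighborSet w).ncard := Set.ncard_union_le _ _
    _ = (S.ncard - 1) + (D ∩ F.neighborSet w).ncard := by
      rw [Set.ncard_sdiff_singleton_of_mem hw]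

theorem ncard_add_ncard_add_ncard_eq_card (hpart : X ∪ Y = Dᶜ) (hdisj : Disjoint X Y) :
    X.ncard + Y.ncard + D.ncard = Nat.card V := by
  rw [← Set.ncard_union_eq hdisj, hpart, add_comm, Set.ncard_add_ncard_compl]

theorem subset_neighborSet_of_mem_of_two_sides {k : ℕ} (hσ : SigmaTwoGE F (Nat.card V + k))
    (hD : D.ncard = k + 2) (hpart : X ∪ Y = Dᶜ) (hdisj : Disjoint X Y) (hY : Y.Nonempty)
    (hXY : ∀ x ∈ X, ∀ y ∈ Y, ¬ F.Adj x y) (hw : w ∈ X) : D ⊆ F.neighborSet w := by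
  obtain ⟨y, hy⟩ := hY
  have hore := hσ (hdisj.ne_of_mem hw hy) (hXY w hw y hy)
  have hdeg_w := ncard_neighborSet_le_of_subset_union hw
    (neighborSet_subset_union_of_not_adj hpart hXY hw)
  have hdeg_y := ncard_neighborSet_le_of_subset_union hy
    (neighborSet_subset_union_of_not_adj ((Set.union_comm Y X).trans hpart) (not_adj_swap hXY) hy)
  have hDy : (D ∩ F.neighborSet y).ncard ≤ D.ncard := Set.ncard_inter_le_ncard_left _ _
  have hcard := ncard_add_ncard_add_ncard_eq_card hpart hdisj
  have hX_pos : 0 < X.ncard := (Set.ncard_pos (Set.toFinite X)).2 ⟨w, hw⟩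
  have hY_pos : 0 < Y.ncard := (Set.ncard_pos (Set.toFinite Y)).2 ⟨y, hy⟩
  have hDw : D.ncard ≤ (D ∩ F.neighborSet w).ncard := by omega
  rw [← Set.eq_of_subset_of_ncard_le Set.inter_subset_left hDw]
  exact Set.inter_subset_right

end SimpleGraph

theorem dominating_of_deleted_set_two_cliques_general
    {V : Type*} [Fintype V] {n k : ℕ} (hV : Fintype.card V = n) (F : SimpleGraph V)
    (hσ : SigmaTwoGE F (n + k)) (D : Set V) (hD : D.ncard = k + 2)
    (X Y : Set V) (hpart : X ∪ Y = Dᶜ) (hdisj : Disjoint X Y)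
    (hX : X.Nonempty) (hY : Y.Nonempty)
    (hXY : ∀ x ∈ X, ∀ y ∈ Y, ¬ F.Adj x y) :
    ∀ d ∈ D, ∀ w ∉ D, F.Adj d w := by
  subst hV
  rw [← Nat.card_eq_fintype_card] at hσ
  intro d hd w hwD
  rcases (show w ∈ X ∪ Y from hpart ▸ hwD) with hwX | hwY
  · exact (subset_neighborSet_of_mem_of_two_sides hσ hD hpart hdisj hY hXY hwX hd).symm
  · exact (subset_neighborSet_of_mem_of_two_sides hσ hD ((Set.union_comm Y X).trans hpart)
      hdisj.symm hX (not_adj_swap hXY) hwY hd).symm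

/-- Case 2 of the proof: if the Ore bound is `n + k`, `|D| = k + 2`, and
`V ∖ D` induces exactly a disjoint union of two nonempty cliques `X` and `Y`, then every
vertex of `D` dominates `V ∖ D`. -/
theorem dominating_of_deleted_set_two_cliques
    {V : Type*} [Fintype V] {n k : ℕ} (hV : Fintype.card V = n) (F : SimpleGraph V)
    (hσ : SigmaTwoGE F (n + k)) (D : Set V) (hD : D.ncard = k + 2)
    (X Y : Set V) (hpart : X ∪ Y = Dᶜ) (hdisj : Disjoint X Y)
    (hX : X.Nonempty) (hY : Y.Nonempty)
    (hXclique : ∀ x ∈ X, ∀ y ∈ X, x ≠ y → F.Adj x y)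
    (hYclique : ∀ x ∈ Y, ∀ y ∈ Y, x ≠ y → F.Adj x y)
    (hXY : ∀ x ∈ X, ∀ y ∈ Y, ¬ F.Adj x y) :
    ∀ d ∈ D, ∀ w ∉ D, F.Adj d w :=
  dominating_of_deleted_set_two_cliques_general hV F hσ D hD X Y hpart hdisj hX hY hXY
end
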